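/- Let X be a finite set with |X| ≥ 2 and define δ(A) = 1 for all A ⊆ X with |A| > 1 and δ(A) = 0 for |A| ≤ 1. Then (X, δ) is a diversity of negative type. -/

import Mathlib

/-!
If `x` vanishes at `∅`, then `x A * x B ≠ 0` together with `|A ∪ B| ≤ 1` forces `A = B` to be a
singleton, so the quadratic form `∑ x_A x_B δ(A ∪ B)` equals `(∑ x_A)² - ∑_{|A| ≤ 1} x_A²`, which is
`≤ 0` once `∑ x_A = 0`. The triangle inequality can only fail when `|A ∪ B| ≤ 1` and `|B ∪ C| ≤ 1`,
but then the nonempty set `B` contains `A` and `C`, so `|A ∪ C| ≤ |B| ≤ 1`.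
-/

open Finset

section

variable {X : Type*} [DecidableEq X]

def IsDiversity (δ : Finset X → ℝ) : Prop :=
  (∀ A : Finset X, 0 ≤ δ A) ∧
  (∀ A : Finset X, δ A = 0 ↔ A.card ≤ 1) ∧
  (∀ A B C : Finset X, B.Nonempty → δ (A ∪ C) ≤ δ (A ∪ B) + δ (B ∪ C))

def IsNegativeType [Fintype X] (δ : Finset X → ℝ) : Prop :=
  ∀ x : Finset X → ℝ, x ∅ = 0 → (∑ A : Finset X, x A) = 0 →
    ∑ A : Finset X, ∑ B : Finset X, x A * x B * δ (A ∪ B) ≤ 0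

def discreteDiversity (A : Finset X) : ℝ := if 1 < A.card then 1 else 0

theorem Finset.subset_of_card_union_le_one {A B : Finset X} (hB : B.Nonempty)
    (h : (A ∪ B).card ≤ 1) : A ⊆ B := by
  have hAB : B = A ∪ B :=
    eq_of_subset_of_card_le subset_union_right (h.trans hB.card_pos)
  exact hAB ▸ subset_union_left

theorem Finset.card_union_le_one_iff {A B : Finset X} (hA : A.Nonempty) (hB : B.Nonempty) :
    (A ∪ B).card ≤ 1 ↔ A = B ∧ A.card ≤ 1 := by
  constructor
  · intro h
    refine ⟨(subset_of_card_union_le_one hB h).antisymm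
      (subset_of_card_union_le_one hA (union_comm A B ▸ h)), ?_⟩
    exact (card_le_card subset_union_left).trans h
  · rintro ⟨rfl, h⟩
    rwa [union_self]

theorem discreteDiversity_isDiversity : IsDiversity (discreteDiversity (X := X)) := by
  refine ⟨fun A => ?_, fun A => ?_, fun A B C hB => ?_⟩
  · unfold discreteDiversity; split <;> norm_num
  · unfold discreteDiversity; split <;> simp <;> omega
  · unfold discreteDiversity
    by_cases hAC : 1 < (A ∪ C).card
    · by_cases hAB : 1 < (A ∪ B).card
      · simp only [hAC, hAB, if_true]; split <;> norm_num
      by_cases hBC : 1 < (B ∪ C).card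
      · simp only [hAC, hAB, hBC, if_true, if_false]; norm_num
      rw [not_lt] at hAB hBC
      have hACB : A ∪ C ⊆ B := union_subset (subset_of_card_union_le_one hB hAB)
        (subset_of_card_union_le_one hB (union_comm B C ▸ hBC))
      have hB₁ : B.card ≤ 1 := (card_le_card subset_union_left).trans hBC
      exact absurd ((card_le_card hACB).trans hB₁) (not_le.mpr hAC)
    · simp only [hAC, if_false]; split <;> split <;> norm_num

theorem mul_mul_discreteDiversity_union {x : Finset X → ℝ} (hx : x ∅ = 0)
    (A B : Finset X) :
    x A * x B * discreteDiversity (A ∪ B) =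
      x A * x B - if A = B ∧ A.card ≤ 1 then x A * x B else 0 := by
  rcases A.eq_empty_or_nonempty with rfl | hA
  · simp [hx]
  rcases B.eq_empty_or_nonempty with rfl | hB
  · simp [hx]
  simp only [discreteDiversity, ← not_le, card_union_le_one_iff hA hB, ite_not]
  split_ifs <;> ring

theorem sum_sum_mul_discreteDiversity_union [Fintype X] {x : Finset X → ℝ} (hx : x ∅ = 0) :
    ∑ A : Finset X, ∑ B : Finset X, x A * x B * discreteDiversity (A ∪ B) =
      (∑ A : Finset X, x A) ^ 2 - ∑ A with A.card ≤ 1, x A ^ 2 := by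
  simp_rw [mul_mul_discreteDiversity_union hx, sum_sub_distrib, ← sum_mul_sum, ← sq,
    sum_filter]
  congr 1
  refine sum_congr rfl fun A _ => ?_
  simp [ite_and, sq]

theorem discreteDiversity_isNegativeType [Fintype X] :
    IsNegativeType (discreteDiversity (X := X)) := by
  intro x hx hsum
  rw [sum_sum_mul_discreteDiversity_union hx, hsum, zero_pow two_ne_zero, zero_sub,
    neg_nonpos]
  exact sum_nonneg fun A _ => sq_nonneg (x A)

end

theorem stmt8_general {X : Type*} [Fintype X] [DecidableEq X]
    (δ : Finset X → ℝ)
    (hδ : ∀ A : Finset X, δ A = if 1 < A.card then 1 else 0) :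
    ((∀ A : Finset X, 0 ≤ δ A) ∧
     (∀ A : Finset X, δ A = 0 ↔ A.card ≤ 1) ∧
     (∀ A B C : Finset X, B.Nonempty → δ (A ∪ C) ≤ δ (A ∪ B) + δ (B ∪ C))) ∧
    (∀ x : Finset X → ℝ, x ∅ = 0 → (∑ A : Finset X, x A) = 0 →
      ∑ A : Finset X, ∑ B : Finset X, x A * x B * δ (A ∪ B) ≤ 0) := by
  obtain rfl : δ = discreteDiversity := funext hδ
  exact ⟨discreteDiversity_isDiversity, discreteDiversity_isNegativeType⟩

/-- On a finite set `X` with `|X| ≥ 2`, the function `δ` with `δ(A) = 1`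
for `|A| > 1` and `δ(A) = 0` otherwise is a diversity of negative type. -/
theorem stmt8 {X : Type*} [Fintype X] [DecidableEq X] (hX : 2 ≤ Fintype.card X)
    (δ : Finset X → ℝ)
    (hδ : ∀ A : Finset X, δ A = if 1 < A.card then 1 else 0) :
    ((∀ A : Finset X, 0 ≤ δ A) ∧
     (∀ A : Finset X, δ A = 0 ↔ A.card ≤ 1) ∧
     (∀ A B C : Finset X, B.Nonempty → δ (A ∪ C) ≤ δ (A ∪ B) + δ (B ∪ C))) ∧
    (∀ x : Finset X → ℝ, x ∅ = 0 → (∑ A : Finset X, x A) = 0 →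
      ∑ A : Finset X, ∑ B : Finset X, x A * x B * δ (A ∪ B) ≤ 0) :=
  stmt8_general δ hδ
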